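/- arXiv:1807.08510 — 2 statements merged into one kernel-verified Lean document; each statement's English description precedes it below -/
import Mathlib

section
/- Suppose N : [0,∞) → ℕ is nondecreasing, let 0 < r < 3 and d_S = ln 9 / (ln 3 − ln r), and let c̃₂ > 0 be a constant. Assume limsup_{x→∞} N(x) x^{−d_S/2} < ∞, and assume there is a sequence ν_n → ∞ with ν_n ≤ c̃₂ (3/r)^n and jump N(ν_n) − N(ν_n⁻) ≥ 3^n. Then liminf_{x→∞} N(x) x^{−d_S/2} < limsup_{x→∞} N(x) x^{−d_S/2}. -/
open Filter Topology

/-- Non-convergence from high-multiplicity jumps: let `N` be nondecreasing with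
`limsup N(x) x^{−d_S/2} < ∞`, where `d_S = ln 9/(ln 3 − ln r)`, `0 < r < 3`.
If there is a sequence `ν_n → ∞` with `ν_n ≤ c̃₂ (3/r)^n` at which `N` jumps by
at least `3^n` (i.e. `N(ν_n) − N(ν_n⁻) ≥ 3^n`), then
`liminf N(x) x^{−d_S/2} < limsup N(x) x^{−d_S/2}`. -/
theorem nonconvergence_of_jumps (N : ℝ → ℕ) (hmono : Monotone N)
    (r : ℝ) (hr0 : 0 < r) (hr3 : r < 3)
    (dS : ℝ) (hdS : dS = Real.log 9 / (Real.log 3 - Real.log r))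
    (hbdd : IsBoundedUnder (· ≤ ·) atTop
      (fun x : ℝ => (N x : ℝ) * x ^ (-(dS / 2))))
    (c₂ : ℝ) (hc₂ : 0 < c₂) (ν : ℕ → ℝ)
    (hν_pos : ∀ n, 0 < ν n)
    (hν_tendsto : Tendsto ν atTop atTop)
    (hν_le : ∀ n, ν n ≤ c₂ * (3 / r) ^ n)
    (hjump : ∀ n, ∀ y, y < ν n → (N y : ℝ) + 3 ^ n ≤ (N (ν n) : ℝ)) :
    liminf (fun x : ℝ => (N x : ℝ) * x ^ (-(dS / 2))) atTop <
      limsup (fun x : ℝ => (N x : ℝ) * x ^ (-(dS / 2))) atTop := by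
  set F : ℝ → ℝ := fun x : ℝ => (N x : ℝ) * x ^ (-(dS / 2)) with hF
  set p : ℝ := dS / 2 with hp
  -- basic: log 3 - log r > 0
  have hlog : 0 < Real.log 3 - Real.log r := by
    have := Real.log_lt_log hr0 hr3
    linarith
  have hlog9 : Real.log 9 = 2 * Real.log 3 := by
    rw [show (9:ℝ) = 3 ^ 2 by norm_num, Real.log_pow]; push_cast; ring
  have hp_pos : 0 < p := by
    rw [hp, hdS, hlog9]
    have h3 : 0 < Real.log 3 := Real.log_pos (by norm_num)
    positivity
  have h3r : (0:ℝ) < 3 / r := by positivity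
  -- key exponent identity : (3/r)^p = 3
  have hkey : (3 / r : ℝ) ^ p = 3 := by
    rw [Real.rpow_def_of_pos h3r, Real.log_div (by norm_num) (ne_of_gt hr0)]
    rw [hp, hdS, hlog9]
    rw [show 2 * Real.log 3 / (Real.log 3 - Real.log r) / 2 = Real.log 3 / (Real.log 3 - Real.log r) by ring]
    rw [show (Real.log 3 - Real.log r) * (Real.log 3 / (Real.log 3 - Real.log r)) = Real.log 3 by
      field_simp]
    exact Real.exp_log (by norm_num)
  set δ : ℝ := c₂ ^ (-p) with hδ
  have hδ_pos : 0 < δ := Real.rpow_pos_of_pos hc₂ _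
  -- key jump estimate: δ ≤ 3^n * (ν n)^(-p)
  have hkey2 : ∀ n : ℕ, δ ≤ (3:ℝ) ^ n * (ν n) ^ (-p) := by
    intro n
    have h1 : (c₂ * (3 / r) ^ n) ^ (-p) ≤ (ν n) ^ (-p) :=
      Real.rpow_le_rpow_of_nonpos (hν_pos n) (hν_le n) (by linarith)
    have hpow : (((3 / r : ℝ)) ^ n) ^ p = (3:ℝ) ^ n := by
      rw [← Real.rpow_natCast (3/r) n, ← Real.rpow_mul h3r.le, mul_comm,
        Real.rpow_mul h3r.le, hkey, Real.rpow_natCast]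
    have h2 : (c₂ * (3 / r) ^ n) ^ (-p) = δ * ((3:ℝ) ^ n)⁻¹ := by
      rw [Real.mul_rpow hc₂.le (by positivity),
        Real.rpow_neg (le_of_lt (pow_pos h3r n)), hpow]
    have h3 : (0:ℝ) < 3 ^ n := by positivity
    calc δ = 3 ^ n * (δ * ((3:ℝ)^n)⁻¹) := by field_simp
    _ ≤ 3 ^ n * (ν n) ^ (-p) := by
        rw [← h2]; exact mul_le_mul_of_nonneg_left h1 h3.le
  -- choose points Y n slightly below ν n
  have hex : ∀ n : ℕ, ∃ y : ℝ, ν n - 1 < y ∧ y < ν n ∧ 0 < y ∧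
      y ^ (-p) ≤ (ν n) ^ (-p) + (1/2) ^ n / ((N (ν n) : ℝ) + 1) := by
    intro n
    have hne : NeBot (𝓝[<] (ν n)) := nhdsLT_neBot _
    have hcont : Tendsto (fun y : ℝ => y ^ (-p)) (𝓝[<] (ν n)) (𝓝 ((ν n) ^ (-p))) :=
      ((Real.continuousAt_rpow_const (ν n) (-p) (Or.inl (ne_of_gt (hν_pos n)))).continuousWithinAt)
    have hε : (0:ℝ) < (1/2) ^ n / ((N (ν n) : ℝ) + 1) := by positivity
    have e1 : ∀ᶠ y in 𝓝[<] (ν n), ν n - 1 < y :=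
      eventually_nhdsWithin_of_eventually_nhds (eventually_gt_nhds (by linarith))
    have e2 : ∀ᶠ y in 𝓝[<] (ν n), y < ν n := eventually_mem_nhdsWithin
    have e3 : ∀ᶠ y in 𝓝[<] (ν n), 0 < y :=
      eventually_nhdsWithin_of_eventually_nhds (eventually_gt_nhds (hν_pos n))
    have e4 : ∀ᶠ y in 𝓝[<] (ν n),
        y ^ (-p) ≤ (ν n) ^ (-p) + (1/2) ^ n / ((N (ν n) : ℝ) + 1) :=
      hcont.eventually (eventually_le_nhds (by linarith))
    exact ((e1.and (e2.and (e3.and e4))).exists).imp (fun y h => ⟨h.1, h.2.1, h.2.2.1, h.2.2.2⟩)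
  choose Y hY1 hY2 hY3 hY4 using hex
  -- main pointwise estimate
  have hmain : ∀ n : ℕ, F (Y n) ≤ F (ν n) - δ + (1/2) ^ n := by
    intro n
    have hj := hjump n (Y n) (hY2 n)
    have hNY : (0:ℝ) ≤ (N (Y n) : ℝ) := Nat.cast_nonneg _
    have hYp : (0:ℝ) ≤ (Y n) ^ (-p) := Real.rpow_nonneg (hY3 n).le _
    have hνp : (0:ℝ) ≤ (ν n) ^ (-p) := Real.rpow_nonneg (hν_pos n).le _
    have h3n : (0:ℝ) < 3 ^ n := by positivity
    have hA1 : (0:ℝ) < (N (ν n) : ℝ) + 1 := by positivity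
    have hεle : ((N (ν n) : ℝ) + 1) * ((1/2) ^ n / ((N (ν n) : ℝ) + 1)) = (1/2)^n := by
      rw [mul_comm, div_mul_cancel₀ _ (ne_of_gt hA1)]
    have hε0 : (0:ℝ) ≤ (1/2) ^ n / ((N (ν n) : ℝ) + 1) := by positivity
    have hk := hkey2 n
    have h4 := hY4 n
    have : F (Y n) = (N (Y n) : ℝ) * (Y n) ^ (-p) := by rw [hF]
    rw [this]
    have hFν : F (ν n) = (N (ν n) : ℝ) * (ν n) ^ (-p) := by rw [hF]
    rw [hFν]
    nlinarith [mul_le_mul_of_nonneg_right hj hYp,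
      mul_le_mul_of_nonneg_left h4 (by linarith : (0:ℝ) ≤ (N (ν n):ℝ) - 3^n)]
  -- Y tends to atTop
  have hYtend : Tendsto Y atTop atTop :=
    tendsto_atTop_mono (fun n => (hY1 n).le)
      (tendsto_atTop_add_const_right _ (-1) hν_tendsto |>.congr (by intro n; ring_nf))
  -- boundedness facts
  have h0 : ∀ᶠ x in atTop, 0 ≤ F x := by
    filter_upwards [eventually_ge_atTop (0:ℝ)] with x hx
    exact mul_nonneg (Nat.cast_nonneg _) (Real.rpow_nonneg hx _)
  obtain ⟨b, hb⟩ := hbdd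
  rw [eventually_map] at hb
  have hbY : ∀ᶠ n in atTop, F (Y n) ≤ b := hYtend.eventually hb
  have hbν : ∀ᶠ n in atTop, F (ν n) ≤ b := hν_tendsto.eventually hb
  have h0ν : ∀ n, 0 ≤ F (ν n) := fun n =>
    mul_nonneg (Nat.cast_nonneg _) (Real.rpow_nonneg (hν_pos n).le _)
  have h0Y : ∀ n, 0 ≤ F (Y n) := fun n =>
    mul_nonneg (Nat.cast_nonneg _) (Real.rpow_nonneg (hY3 n).le _)
  have bA : IsBoundedUnder (· ≥ ·) atTop F := ⟨0, by rwa [eventually_map]⟩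
  have bY_above : IsBoundedUnder (· ≤ ·) atTop (F ∘ Y) := ⟨b, by rwa [eventually_map]⟩
  have bν_above : IsBoundedUnder (· ≤ ·) atTop (F ∘ ν) := ⟨b, by rwa [eventually_map]⟩
  have bν_below : IsBoundedUnder (· ≥ ·) atTop (F ∘ ν) :=
    ⟨0, by rw [eventually_map]; exact Eventually.of_forall h0ν⟩
  -- step 1 : liminf F ≤ liminf (F ∘ Y)
  have step1 : liminf F atTop ≤ liminf (F ∘ Y) atTop := by
    rw [liminf_comp]
    exact liminf_le_liminf_of_le hYtend bA
      (IsBoundedUnder.isCoboundedUnder_ge (by rwa [IsBoundedUnder, map_map]))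
  -- step 2 : liminf (F ∘ Y) ≤ liminf (F ∘ ν + const)
  have step2 : liminf (F ∘ Y) atTop ≤ liminf (fun n => F (ν n) + (-(δ/2))) atTop := by
    apply liminf_le_liminf
    · have hhalf : ∀ᶠ n : ℕ in atTop, ((1:ℝ)/2) ^ n ≤ δ/2 := by
        have : Tendsto (fun n : ℕ => ((1:ℝ)/2) ^ n) atTop (nhds 0) :=
          tendsto_pow_atTop_nhds_zero_of_lt_one (by norm_num) (by norm_num)
        exact this.eventually (eventually_le_nhds (by linarith))
      filter_upwards [hhalf] with n hn
      have := hmain n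
      simp only [Function.comp_apply]
      linarith
    · exact ⟨0, by rw [eventually_map]; exact Eventually.of_forall h0Y⟩
    · have hub : IsBoundedUnder (· ≤ ·) atTop (fun n => F (ν n) + (-(δ/2))) := by
        refine ⟨b + (-(δ/2)), ?_⟩
        rw [eventually_map]
        filter_upwards [hbν] with n hn
        exact add_le_add_left hn _
      exact IsBoundedUnder.isCoboundedUnder_ge hub
  -- step 3 : compute liminf of shifted sequence
  have step3 : liminf (fun n => F (ν n) + (-(δ/2))) atTop
      = liminf (F ∘ ν) atTop + (-(δ/2)) :=
    liminf_add_const atTop (F ∘ ν) _ (bν_above.isCoboundedUnder_ge) bν_below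
  -- step 4 : liminf ≤ limsup along ν
  have step4 : liminf (F ∘ ν) atTop ≤ limsup (F ∘ ν) atTop :=
    liminf_le_limsup bν_above bν_below
  -- step 5 : limsup (F ∘ ν) ≤ limsup F
  have step5 : limsup (F ∘ ν) atTop ≤ limsup F atTop := by
    rw [limsup_comp]
    refine limsup_le_limsup_of_le hν_tendsto
      (IsBoundedUnder.isCoboundedUnder_le ?_) ⟨b, by rwa [eventually_map]⟩
    show IsBounded _ (map F (map ν atTop))
    rw [map_map]
    exact bν_below
  have : liminf F atTop ≤ limsup F atTop + (-(δ/2)) := by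
    calc liminf F atTop ≤ liminf (F ∘ Y) atTop := step1
    _ ≤ liminf (fun n => F (ν n) + (-(δ/2))) atTop := step2
    _ = liminf (F ∘ ν) atTop + (-(δ/2)) := step3
    _ ≤ limsup (F ∘ ν) atTop + (-(δ/2)) := by linarith
    _ ≤ limsup F atTop + (-(δ/2)) := by linarith
  linarith
end

section
/- Suppose N_D : [0,∞) → ℕ is nondecreasing with N_D(x) = 0 for x < λ₁ (some λ₁ > 0), and suppose N_D satisfies N_D(x) = 3 N_D(βr·x) + R(x) where 0 < βr < 1 and |R(x)| ≤ C x^{1/2} for x ≥ 1 and R bounded on [0,1]. Let d_S = ln 9 / (−ln(βr)) and assume d_S > 1. Then there exists a periodic function G with period T = −(1/2)ln(βr) such that N_D(x) = G((ln x)/2) x^{d_S/2} + O(x^{1/2}) as x → ∞. -/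
/-!
Rescale to `f t = e^{-d_S t} N_D(e^{2t})`. Since `e^{2T} = b⁻¹` and `e^{d_S T} = 3`, the scaling
relation becomes the renewal equation `f (t + T) = f t + u t`, where the remainder bound gives
`|u t| ≤ K e^{-(d_S - 1) t}` for `t ≥ 0`. Because `d_S > 1` the increments along `t + nT` are
geometrically summable, so `g t = f t + ∑ₙ u (t + nT)` is `T`-periodic and differs from `f t` by a
tail of size `O(e^{-(d_S - 1) t})`; undoing the rescaling gives the error `O(x^{1/2})`.
-/

open Filter Real

section Renewal

variable {f u : ℝ → ℝ} {T ε K : ℝ}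

lemma abs_apply_add_nat_mul_le (hu : ∀ t, 0 ≤ t → |u t| ≤ K * exp (-(ε * t))) (hT : 0 ≤ T)
    {s : ℝ} (hs : 0 ≤ s) (n : ℕ) :
    |u (s + n * T)| ≤ K * exp (-(ε * s)) * exp (-(ε * T)) ^ n := by
  calc |u (s + n * T)| ≤ K * exp (-(ε * (s + n * T))) := hu _ (by positivity)
    _ = K * exp (-(ε * s)) * exp (-(ε * T)) ^ n := by
      rw [← exp_nat_mul, mul_assoc, ← exp_add]
      ring_nf

/-- Only the tail `t + nT ≥ 0` matters, so this holds for every `t`; this is what makes the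
periodic profile below well defined on all of `ℝ`. -/
lemma summable_comp_add_nat_mul (hu : ∀ t, 0 ≤ t → |u t| ≤ K * exp (-(ε * t))) (hT : 0 < T)
    (hε : 0 < ε) (t : ℝ) : Summable fun n : ℕ => u (t + n * T) := by
  obtain ⟨N, hN⟩ := exists_nat_ge (-t / T)
  have hs : 0 ≤ t + N * T := by
    have := (div_le_iff₀ hT).1 hN
    linarith
  have hq : exp (-(ε * T)) < 1 := exp_lt_one_iff.2 (by nlinarith)
  rw [← summable_nat_add_iff N]
  refine Summable.of_norm_bounded
    ((summable_geometric_of_lt_one (exp_pos _).le hq).mul_left (K * exp (-(ε * (t + N * T)))))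
    fun n => ?_
  rw [norm_eq_abs, show t + ((n + N : ℕ) : ℝ) * T = t + N * T + n * T by push_cast; ring]
  exact abs_apply_add_nat_mul_le hu hT.le hs n

lemma abs_tsum_comp_add_nat_mul_le (hu : ∀ t, 0 ≤ t → |u t| ≤ K * exp (-(ε * t))) (hT : 0 < T)
    (hε : 0 < ε) {s : ℝ} (hs : 0 ≤ s) :
    |∑' n : ℕ, u (s + n * T)| ≤ K / (1 - exp (-(ε * T))) * exp (-(ε * s)) := by
  have hq : exp (-(ε * T)) < 1 := exp_lt_one_iff.2 (by nlinarith)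
  have hgeom := (hasSum_geometric_of_lt_one (exp_pos _).le hq).mul_left (K * exp (-(ε * s)))
  calc |∑' n : ℕ, u (s + n * T)| ≤ K * exp (-(ε * s)) * (1 - exp (-(ε * T)))⁻¹ := by
        rw [← norm_eq_abs]
        exact tsum_of_norm_bounded hgeom fun n => abs_apply_add_nat_mul_le hu hT.le hs n
    _ = K / (1 - exp (-(ε * T))) * exp (-(ε * s)) := by ring

theorem exists_periodic_abs_sub_le_of_add_period (hT : 0 < T) (hε : 0 < ε)
    (hf : ∀ t, f (t + T) = f t + u t) (hu : ∀ t, 0 ≤ t → |u t| ≤ K * exp (-(ε * t))) :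
    ∃ g : ℝ → ℝ, Function.Periodic g T ∧
      ∃ K' : ℝ, ∀ t, 0 ≤ t → |f t - g t| ≤ K' * exp (-(ε * t)) := by
  refine ⟨fun t => f t + ∑' n : ℕ, u (t + n * T), fun t => ?_,
    K / (1 - exp (-(ε * T))), fun t ht => ?_⟩
  · have hshift : ∀ n : ℕ, t + T + n * T = t + (n + 1 : ℕ) * T := fun n => by push_cast; ring
    simp only [hf, hshift, (summable_comp_add_nat_mul hu hT hε t).tsum_eq_zero_add]
    simp only [Nat.cast_zero, zero_mul, add_zero]
    ring
  · rw [show f t - (f t + ∑' n : ℕ, u (t + n * T)) = -∑' n : ℕ, u (t + n * T) by ring, abs_neg]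
    exact abs_tsum_comp_add_nat_mul_le hu hT hε ht

end Renewal

section CountingFunction

variable {b dS : ℝ}

lemma exp_two_mul_neg_half_log (hb0 : 0 < b) : exp (2 * (-(1 / 2) * log b)) = b⁻¹ := by
  rw [show 2 * (-(1 / 2) * log b) = -log b by ring, exp_neg, exp_log hb0]

lemma exp_mul_neg_half_log (hb0 : 0 < b) (hb1 : b < 1) (hdS : dS = log 9 / (-log b)) :
    exp (dS * (-(1 / 2) * log b)) = 3 := by
  have hlogb : log b ≠ 0 := (log_neg hb0 hb1).ne
  have hlog9 : log 9 = 2 * log 3 := by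
    rw [show (9 : ℝ) = 3 ^ 2 by norm_num, log_pow]
    push_cast
    ring
  rw [hdS, hlog9, show 2 * log 3 / -log b * (-(1 / 2) * log b) = log 3 by field_simp,
    exp_log (by norm_num)]

variable {ND : ℝ → ℕ} {R : ℝ → ℝ}

lemma rescaled_count_add_period (hb0 : 0 < b) (hb1 : b < 1) (hdS : dS = log 9 / (-log b))
    (hren : ∀ x : ℝ, (ND x : ℝ) = 3 * (ND (b * x) : ℝ) + R x) (t : ℝ) :
    exp (-(dS * (t + -(1 / 2) * log b))) * ND (exp (2 * (t + -(1 / 2) * log b))) =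
      exp (-(dS * t)) * ND (exp (2 * t)) +
        exp (-(dS * (t + -(1 / 2) * log b))) * R (exp (2 * (t + -(1 / 2) * log b))) := by
  have hscale : b * exp (2 * (t + -(1 / 2) * log b)) = exp (2 * t) := by
    rw [mul_add, exp_add, exp_two_mul_neg_half_log hb0]
    field_simp
  have hdecay : exp (-(dS * (t + -(1 / 2) * log b))) * 3 = exp (-(dS * t)) := by
    rw [← exp_mul_neg_half_log hb0 hb1 hdS, ← exp_add]
    ring_nf
  rw [hren, hscale, ← hdecay]
  ring

lemma abs_rescaled_remainder_le (hb0 : 0 < b) (hb1 : b < 1) {C : ℝ}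
    (hR : ∀ x : ℝ, 1 ≤ x → |R x| ≤ C * x ^ ((1 : ℝ) / 2)) {t : ℝ} (ht : 0 ≤ t) :
    |exp (-(dS * (t + -(1 / 2) * log b))) * R (exp (2 * (t + -(1 / 2) * log b)))| ≤
      C * exp (-((dS - 1) * (-(1 / 2) * log b))) * exp (-((dS - 1) * t)) := by
  have hlogb := log_neg hb0 hb1
  set s := t + -(1 / 2) * log b
  have hs : 0 ≤ s := by simp only [s]; nlinarith
  have hsqrt : exp (2 * s) ^ ((1 : ℝ) / 2) = exp s := by
    rw [← exp_mul]
    ring_nf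
  calc |exp (-(dS * s)) * R (exp (2 * s))| = exp (-(dS * s)) * |R (exp (2 * s))| := by
        rw [abs_mul, abs_of_pos (exp_pos _)]
    _ ≤ exp (-(dS * s)) * (C * exp s) := by
        rw [← hsqrt]
        exact mul_le_mul_of_nonneg_left (hR _ (one_le_exp (by linarith))) (exp_pos _).le
    _ = C * exp (-((dS - 1) * (-(1 / 2) * log b))) * exp (-((dS - 1) * t)) := by
        rw [mul_left_comm, mul_assoc, ← exp_add, ← exp_add]
        simp only [s]
        ring_nf

end CountingFunction

theorem renewal_asymptotics_counting_function_general
    (ND : ℝ → ℕ)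
    (b : ℝ) (hb0 : 0 < b) (hb1 : b < 1)
    (R : ℝ → ℝ)
    (hren : ∀ x : ℝ, (ND x : ℝ) = 3 * (ND (b * x) : ℝ) + R x)
    (C : ℝ) (hR : ∀ x : ℝ, 1 ≤ x → |R x| ≤ C * x ^ ((1 : ℝ) / 2))
    (dS : ℝ) (hdS : dS = Real.log 9 / (-Real.log b)) (hdS1 : 1 < dS) :
    ∃ G : ℝ → ℝ, Function.Periodic G (-(1 / 2) * Real.log b) ∧
      ∃ C' : ℝ, ∀ᶠ x : ℝ in atTop,
        |(ND x : ℝ) - G (Real.log x / 2) * x ^ (dS / 2)| ≤ C' * x ^ ((1 : ℝ) / 2) := by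
  have hT : 0 < -(1 / 2) * log b := by nlinarith [log_neg hb0 hb1]
  obtain ⟨G, hG, K, hfG⟩ := exists_periodic_abs_sub_le_of_add_period (f := fun t =>
    exp (-(dS * t)) * ND (exp (2 * t))) hT (sub_pos.2 hdS1)
    (rescaled_count_add_period hb0 hb1 hdS hren) (fun t => abs_rescaled_remainder_le hb0 hb1 hR)
  refine ⟨G, hG, K, ?_⟩
  filter_upwards [eventually_ge_atTop (1 : ℝ)] with x hx
  set t := log x / 2
  have hx0 : 0 < x := one_pos.trans_le hx
  have hrpow : ∀ y : ℝ, x ^ y = exp (2 * t * y) := fun y => by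
    rw [rpow_def_of_pos hx0, show 2 * t = log x by ring]
  have hND : (ND x : ℝ) = exp (dS * t) * (exp (-(dS * t)) * ND (exp (2 * t))) := by
    rw [← mul_assoc, ← exp_add, show 2 * t = log x by ring, exp_log hx0]
    simp
  calc |(ND x : ℝ) - G t * x ^ (dS / 2)|
      = exp (dS * t) * |exp (-(dS * t)) * ND (exp (2 * t)) - G t| := by
        rw [hND, hrpow, show 2 * t * (dS / 2) = dS * t by ring, mul_comm (G t), ← mul_sub, abs_mul,
          abs_of_pos (exp_pos _)]
    _ ≤ exp (dS * t) * (K * exp (-((dS - 1) * t))) :=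
        mul_le_mul_of_nonneg_left (hfG t (div_nonneg (log_nonneg hx) two_pos.le)) (exp_pos _).le
    _ = K * x ^ ((1 : ℝ) / 2) := by
        rw [hrpow, mul_left_comm, ← exp_add]
        ring_nf

/-- Renewal theorem applied to the Dirichlet eigenvalue counting function:
if `N_D` is nondecreasing, vanishes below the first eigenvalue `λ₁ > 0`, and
satisfies `N_D(x) = 3 N_D(b x) + R(x)` with `0 < b < 1` (`b = βr`), where
`|R(x)| ≤ C x^{1/2}` for `x ≥ 1` and `R` is bounded on `[0,1]`, then, with
`d_S = ln 9/(−ln b) > 1`, there is a periodic function `G` of period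
`T = −(1/2)·ln b` such that `N_D(x) = G((ln x)/2)·x^{d_S/2} + O(x^{1/2})`. -/
theorem renewal_asymptotics_counting_function
    (ND : ℝ → ℕ) (hmono : Monotone ND)
    (lam₁ : ℝ) (hlam₁ : 0 < lam₁) (hvanish : ∀ x < lam₁, ND x = 0)
    (b : ℝ) (hb0 : 0 < b) (hb1 : b < 1)
    (R : ℝ → ℝ)
    (hren : ∀ x : ℝ, (ND x : ℝ) = 3 * (ND (b * x) : ℝ) + R x)
    (C : ℝ) (hR : ∀ x : ℝ, 1 ≤ x → |R x| ≤ C * x ^ ((1 : ℝ) / 2))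
    (B : ℝ) (hR01 : ∀ x ∈ Set.Icc (0 : ℝ) 1, |R x| ≤ B)
    (dS : ℝ) (hdS : dS = Real.log 9 / (-Real.log b)) (hdS1 : 1 < dS) :
    ∃ G : ℝ → ℝ, Function.Periodic G (-(1 / 2) * Real.log b) ∧
      ∃ C' : ℝ, ∀ᶠ x : ℝ in atTop,
        |(ND x : ℝ) - G (Real.log x / 2) * x ^ (dS / 2)| ≤ C' * x ^ ((1 : ℝ) / 2) :=
  renewal_asymptotics_counting_function_general ND b hb0 hb1 R hren C hR dS hdS hdS1
end
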